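/- arXiv:2312.06659 — 2 statements merged into one kernel-verified Lean document; each statement's English description precedes it below -/
import Mathlib

section
/- Under Assumption (Lip), for every Q : 𝒳×𝒜 → ℝ and every μ, μ' ∈ Δ(𝒳), ‖P₂(Q,μ) − P₂(Q,μ')‖₁ ≤ (L_p + 2 − |𝒳|c_min)·‖μ − μ'‖₁. -/
open Finset Filter
open scoped Classical

noncomputable section

variable {X A : Type*}

/-- A probability vector on a finite set. -/
def IsProb [Fintype X] (μ : X → ℝ) : Prop := (∀ x, 0 ≤ μ x) ∧ ∑ x, μ x = 1

/-- ℓ¹ norm of a signed measure / vector on a finite set. -/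
def l1 [Fintype X] (μ : X → ℝ) : ℝ := ∑ x, |μ x|

/-- Sup norm of a Q-table. -/
def supQ [Fintype X] [Fintype A] [Nonempty X] [Nonempty A] (Q : X → A → ℝ) : ℝ :=
  Finset.univ.sup' Finset.univ_nonempty (fun xa : X × A => |Q xa.1 xa.2|)

/-- Minimum of a row of a Q-table (minimum over actions). -/
def minRow [Fintype A] [Nonempty A] (q : A → ℝ) : ℝ :=
  Finset.univ.inf' Finset.univ_nonempty q

/-- The soft-min distribution over actions with parameter φ. -/
def softmin [Fintype A] (φ : ℝ) (z : A → ℝ) (a : A) : ℝ :=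
  Real.exp (-φ * z a) / ∑ a', Real.exp (-φ * z a')

/-- The argmin_e policy: uniform over the minimizers, zero elsewhere. -/
def argminE [Fintype A] [Nonempty A] (q : A → ℝ) (a : A) : ℝ :=
  if q a = minRow q then (1 : ℝ) / (Finset.univ.filter fun a' => q a' = minRow q).card else 0

/-- (P^{π,μ} ν)(x) = ∑_{x'} ν(x') ∑_a π(a|x') p(x|x',a,μ). -/
def Ppush [Fintype X] [Fintype A] (p : X → A → (X → ℝ) → X → ℝ)
    (π : X → A → ℝ) (μ ν : X → ℝ) (x : X) : ℝ :=
  ∑ x', ν x' * ∑ a, π x' a * p x' a μ x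

/-- P₂(Q,μ) = P^{softmin_φ Q, μ} μ − μ. -/
def P2 [Fintype X] [Fintype A] (φ : ℝ) (p : X → A → (X → ℝ) → X → ℝ)
    (Q : X → A → ℝ) (μ : X → ℝ) (x : X) : ℝ :=
  Ppush p (fun x' => softmin φ (Q x')) μ μ x - μ x

/-- The Bellman operator (B_μ Q)(x,a) = f(x,a,μ) + γ ∑_{x'} p(x'|x,a,μ) min_{a'} Q(x',a'). -/
def bell [Fintype X] [Fintype A] [Nonempty A]
    (f : X → A → (X → ℝ) → ℝ) (p : X → A → (X → ℝ) → X → ℝ) (γ : ℝ)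
    (μ : X → ℝ) (Q : X → A → ℝ) (x : X) (a : A) : ℝ :=
  f x a μ + γ * ∑ x', p x a μ x' * minRow (Q x')

/-- T₂(Q,μ) = B_μ Q − Q. -/
def T2 [Fintype X] [Fintype A] [Nonempty A]
    (f : X → A → (X → ℝ) → ℝ) (p : X → A → (X → ℝ) → X → ℝ) (γ : ℝ)
    (Q : X → A → ℝ) (μ : X → ℝ) (x : X) (a : A) : ℝ :=
  bell f p γ μ Q x a - Q x a

/-!
Write `K_μ(x', x) = ∑ₐ π(a|x') p(x|x',a,μ)` for the softmin policy `π`. Then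
`P₂(Q,μ) − P₂(Q,μ') = μ(K_μ − K_μ') + (μ − μ')K_μ' − (μ − μ')`.
The first term is a convex combination of the differences `p(·|x',a,μ) − p(·|x',a,μ')` and so has
ℓ¹ norm at most `L_p‖μ − μ'‖₁`. In the second, `μ − μ'` has mass zero and every entry of `K_μ'` is at
least `c_min`, so Dobrushin's estimate bounds it by `(1 − |𝒳| c_min)‖μ − μ'‖₁`. The last term
contributes `‖μ − μ'‖₁`.
-/

theorem l1_add_le [Fintype X] (u v : X → ℝ) :
    l1 (fun x => u x + v x) ≤ l1 u + l1 v := by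
  unfold l1
  rw [← Finset.sum_add_distrib]
  exact Finset.sum_le_sum fun x _ => abs_add_le _ _

theorem l1_sub_le [Fintype X] (u v : X → ℝ) :
    l1 (fun x => u x - v x) ≤ l1 u + l1 v := by
  unfold l1
  rw [← Finset.sum_add_distrib]
  exact Finset.sum_le_sum fun x _ => abs_sub _ _

theorem l1_convexComb_le {ι : Type*} [Fintype ι] [Fintype X] {w : ι → ℝ} (hw : IsProb w)
    {D : ι → X → ℝ} {B : ℝ} (hD : ∀ i, l1 (D i) ≤ B) :
    l1 (fun x => ∑ i, w i * D i x) ≤ B :=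
  calc l1 (fun x => ∑ i, w i * D i x)
      ≤ ∑ x, ∑ i, w i * |D i x| := by
        refine Finset.sum_le_sum fun x _ => (Finset.abs_sum_le_sum_abs _ _).trans_eq ?_
        simp only [abs_mul, abs_of_nonneg (hw.1 _)]
    _ = ∑ i, w i * l1 (D i) := by
        rw [Finset.sum_comm]
        simp only [l1, Finset.mul_sum]
    _ ≤ ∑ i, w i * B := Finset.sum_le_sum fun i _ => mul_le_mul_of_nonneg_left (hD i) (hw.1 i)
    _ = B := by rw [← Finset.sum_mul, hw.2, one_mul]

/-- Dobrushin's contraction estimate. Since `ν` has mass zero, `K` may be replaced by `K - c ≥ 0`,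
whose rows have mass `1 - |X| c`. -/
theorem l1_kernel_apply_le_of_sum_eq_zero {ι : Type*} [Fintype ι] [Fintype X]
    {K : ι → X → ℝ} {c : ℝ} (hKc : ∀ i x, c ≤ K i x) (hK1 : ∀ i, ∑ x, K i x = 1)
    {ν : ι → ℝ} (hν : ∑ i, ν i = 0) :
    l1 (fun x => ∑ i, ν i * K i x) ≤ (1 - Fintype.card X * c) * l1 ν := by
  have hshift : ∀ x, ∑ i, ν i * K i x = ∑ i, ν i * (K i x - c) := fun x => by
    simp only [mul_sub, Finset.sum_sub_distrib, ← Finset.sum_mul, hν, zero_mul, sub_zero]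
  calc l1 (fun x => ∑ i, ν i * K i x)
      ≤ ∑ x, ∑ i, |ν i| * (K i x - c) := by
        refine Finset.sum_le_sum fun x _ => ?_
        dsimp only
        rw [hshift x]
        refine (Finset.abs_sum_le_sum_abs _ _).trans_eq ?_
        simp only [abs_mul, abs_of_nonneg (sub_nonneg.2 (hKc _ x))]
    _ = ∑ i, |ν i| * (1 - Fintype.card X * c) := by
        rw [Finset.sum_comm]
        simp only [← Finset.mul_sum, Finset.sum_sub_distrib, hK1, Finset.sum_const,
          Finset.card_univ, nsmul_eq_mul]
    _ = (1 - Fintype.card X * c) * l1 ν := by rw [← Finset.sum_mul, mul_comm, l1]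

theorem isProb_softmin [Fintype A] [Nonempty A] (φ : ℝ) (z : A → ℝ) : IsProb (softmin φ z) := by
  have hpos : 0 < ∑ a, Real.exp (-φ * z a) :=
    Finset.sum_pos (fun a _ => Real.exp_pos _) Finset.univ_nonempty
  refine ⟨fun a => div_nonneg (Real.exp_pos _).le hpos.le, ?_⟩
  unfold softmin
  rw [← Finset.sum_div, div_self hpos.ne']

/-- The state-to-state kernel `x' ↦ ∑ₐ π(a|x') p(·|x',a,μ)` driving `Ppush p π μ`. -/
def policyKernel [Fintype A] (p : X → A → (X → ℝ) → X → ℝ) (π : X → A → ℝ) (μ : X → ℝ)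
    (x' x : X) : ℝ :=
  ∑ a, π x' a * p x' a μ x

section policyKernel

variable [Fintype A] {p : X → A → (X → ℝ) → X → ℝ} {π : X → A → ℝ}

theorem sum_policyKernel [Fintype X] {μ : X → ℝ} (hπ : ∀ x', IsProb (π x'))
    (hp1 : ∀ x a, ∑ x', p x a μ x' = 1) (x' : X) : ∑ x, policyKernel p π μ x' x = 1 := by
  simp only [policyKernel]
  rw [Finset.sum_comm]
  simp only [← Finset.mul_sum, hp1, mul_one, (hπ x').2]

theorem le_policyKernel {μ : X → ℝ} {c : ℝ} (hπ : ∀ x', IsProb (π x'))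
    (hc : ∀ x a x', c ≤ p x a μ x') (x' x : X) : c ≤ policyKernel p π μ x' x :=
  calc c = ∑ a, π x' a * c := by rw [← Finset.sum_mul, (hπ x').2, one_mul]
    _ ≤ policyKernel p π μ x' x :=
      Finset.sum_le_sum fun a _ => mul_le_mul_of_nonneg_left (hc _ _ _) ((hπ x').1 a)

theorem l1_policyKernel_sub_le [Fintype X] {μ μ' : X → ℝ} {L : ℝ} (hπ : ∀ x', IsProb (π x'))
    (hL : ∀ x a, ∑ x', |p x a μ x' - p x a μ' x'| ≤ L) (x' : X) :
    l1 (fun x => policyKernel p π μ x' x - policyKernel p π μ' x' x) ≤ L := by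
  simp only [policyKernel, ← Finset.sum_sub_distrib, ← mul_sub]
  exact l1_convexComb_le (hπ x') fun a => hL x' a

theorem Ppush_sub_Ppush [Fintype X] (μ μ' : X → ℝ) (x : X) :
    Ppush p π μ μ x - Ppush p π μ' μ' x =
      ∑ x', μ x' * (policyKernel p π μ x' x - policyKernel p π μ' x' x) +
        ∑ x', (μ x' - μ' x') * policyKernel p π μ' x' x := by
  simp only [Ppush, policyKernel, mul_sub, sub_mul, Finset.sum_sub_distrib]
  ring

end policyKernel

theorem P2_lipschitz_in_mu_general [Fintype X] [Fintype A] [Nonempty A]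
    (φ : ℝ)
    (p : X → A → (X → ℝ) → X → ℝ)
    (hp1 : ∀ x a μ, IsProb μ → ∑ x', p x a μ x' = 1)
    (cmin Lp : ℝ)
    (hcmin : ∀ x a μ x', IsProb μ → cmin ≤ p x a μ x')
    (hLp : ∀ x a μ μ', IsProb μ → IsProb μ' →
      ∑ x', |p x a μ x' - p x a μ' x'| ≤ Lp * l1 (fun y => μ y - μ' y))
    (Q : X → A → ℝ) (μ μ' : X → ℝ) (hμ : IsProb μ) (hμ' : IsProb μ') :
    l1 (fun x => P2 φ p Q μ x - P2 φ p Q μ' x)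
      ≤ (Lp + 2 - (Fintype.card X : ℝ) * cmin) * l1 (fun x => μ x - μ' x) := by
  set π : X → A → ℝ := fun x' => softmin φ (Q x')
  set ℓ := l1 (fun x => μ x - μ' x)
  have hπ : ∀ x', IsProb (π x') := fun x' => isProb_softmin φ (Q x')
  have hkernel : l1 (fun x => ∑ x', μ x' * (policyKernel p π μ x' x - policyKernel p π μ' x' x))
      ≤ Lp * ℓ :=
    l1_convexComb_le hμ fun x' => l1_policyKernel_sub_le hπ (fun x a => hLp x a μ μ' hμ hμ') x'
  have hmass : l1 (fun x => ∑ x', (μ x' - μ' x') * policyKernel p π μ' x' x)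
      ≤ (1 - Fintype.card X * cmin) * ℓ :=
    l1_kernel_apply_le_of_sum_eq_zero (le_policyKernel hπ fun x a x' => hcmin x a μ' x' hμ')
      (sum_policyKernel hπ fun x a => hp1 x a μ' hμ')
      (by rw [Finset.sum_sub_distrib, hμ.2, hμ'.2, sub_self])
  have hsplit : (fun x => P2 φ p Q μ x - P2 φ p Q μ' x) = fun x =>
      (∑ x', μ x' * (policyKernel p π μ x' x - policyKernel p π μ' x' x) +
        ∑ x', (μ x' - μ' x') * policyKernel p π μ' x' x) - (μ x - μ' x) := by
    funext x
    rw [← Ppush_sub_Ppush]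
    simp only [P2]
    ring
  calc l1 (fun x => P2 φ p Q μ x - P2 φ p Q μ' x)
      ≤ Lp * ℓ + (1 - Fintype.card X * cmin) * ℓ + ℓ := by
        rw [hsplit]
        exact (l1_sub_le _ _).trans (add_le_add_left ((l1_add_le _ _).trans
          (add_le_add hkernel hmass)) _)
    _ = (Lp + 2 - (Fintype.card X : ℝ) * cmin) * ℓ := by ring

/-- the map μ ↦ P₂(Q,μ) is Lipschitz:
‖P₂(Q,μ) − P₂(Q,μ')‖₁ ≤ (L_p + 2 − |𝒳|c_min)‖μ − μ'‖₁. -/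
theorem P2_lipschitz_in_mu [Fintype X] [Fintype A] [Nonempty X] [Nonempty A]
    (φ : ℝ) (hφ : 0 < φ)
    (p : X → A → (X → ℝ) → X → ℝ)
    (hp0 : ∀ x a μ x', IsProb μ → 0 ≤ p x a μ x')
    (hp1 : ∀ x a μ, IsProb μ → ∑ x', p x a μ x' = 1)
    (cmin Lp : ℝ) (hcmin0 : 0 ≤ cmin)
    (hcmin : ∀ x a μ x', IsProb μ → cmin ≤ p x a μ x')
    (hLp0 : 0 ≤ Lp)
    (hLp : ∀ x a μ μ', IsProb μ → IsProb μ' →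
      ∑ x', |p x a μ x' - p x a μ' x'| ≤ Lp * l1 (fun y => μ y - μ' y))
    (Q : X → A → ℝ) (μ μ' : X → ℝ) (hμ : IsProb μ) (hμ' : IsProb μ') :
    l1 (fun x => P2 φ p Q μ x - P2 φ p Q μ' x)
      ≤ (Lp + 2 - (Fintype.card X : ℝ) * cmin) * l1 (fun x => μ x - μ' x) :=
  P2_lipschitz_in_mu_general φ p hp1 cmin Lp hcmin hLp Q μ μ' hμ hμ'
end
end

section
/- Under Assumption (Lip), the map μ ↦ Q*_μ is Lipschitz: for all μ, μ' ∈ Δ(𝒳), ‖Q*_μ − Q*_{μ'}‖∞ ≤ ((L_f + (γ/(1−γ))L_p‖f‖∞)/(1−γ))·‖μ − μ'‖₁. -/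
open Finset Filter
open scoped Classical

noncomputable section

variable {X A : Type*}

section AuxLemmas
variable [Fintype X] [Fintype A] [Nonempty X] [Nonempty A]

lemma abs_le_supQ (Q : X → A → ℝ) (x : X) (a : A) : |Q x a| ≤ supQ Q := by
  unfold supQ
  exact Finset.le_sup' (fun xa : X × A => |Q xa.1 xa.2|) (Finset.mem_univ (x, a))

lemma supQ_nonneg (Q : X → A → ℝ) : 0 ≤ supQ Q :=
  le_trans (abs_nonneg _) (abs_le_supQ Q (Classical.arbitrary X) (Classical.arbitrary A))

lemma abs_minRow_le_supQ (Q : X → A → ℝ) (x : X) : |minRow (Q x)| ≤ supQ Q := by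
  obtain ⟨a, -, ha⟩ := Finset.exists_mem_eq_inf' Finset.univ_nonempty (Q x)
  have : minRow (Q x) = Q x a := ha
  rw [this]
  exact abs_le_supQ Q x a

lemma exists_supQ (Q : X → A → ℝ) : ∃ x a, supQ Q = |Q x a| := by
  obtain ⟨⟨x, a⟩, -, h⟩ := Finset.exists_mem_eq_sup' (Finset.univ_nonempty (α := X × A))
    (fun xa : X × A => |Q xa.1 xa.2|)
  exact ⟨x, a, h⟩

lemma minRow_sub_le (q q' : A → ℝ) (c : ℝ) (h : ∀ a, |q a - q' a| ≤ c) :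
    minRow q - minRow q' ≤ c := by
  obtain ⟨a, -, ha⟩ := Finset.exists_mem_eq_inf' Finset.univ_nonempty q'
  have h1 : minRow q ≤ q a := Finset.inf'_le _ (Finset.mem_univ a)
  have h2 : minRow q' = q' a := ha
  have h3 := (abs_le.mp (h a)).2
  linarith

lemma minRow_lip (q q' : A → ℝ) (c : ℝ) (h : ∀ a, |q a - q' a| ≤ c) :
    |minRow q - minRow q'| ≤ c := by
  rw [abs_sub_le_iff]
  exact ⟨minRow_sub_le q q' c h, minRow_sub_le q' q c fun a => by rw [abs_sub_comm]; exact h a⟩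

lemma Qstar_bound (γ : ℝ) (hγ0 : 0 < γ) (hγ1 : γ < 1)
    (f : X → A → (X → ℝ) → ℝ) (fnorm : ℝ)
    (p : X → A → (X → ℝ) → X → ℝ) (μ : X → ℝ)
    (hf : ∀ x a, |f x a μ| ≤ fnorm)
    (hp0 : ∀ x a x', 0 ≤ p x a μ x')
    (hp1 : ∀ x a, ∑ x', p x a μ x' = 1)
    (Q : X → A → ℝ) (hQ : bell f p γ μ Q = Q) :
    supQ Q ≤ fnorm / (1 - γ) := by
  obtain ⟨x, a, hxa⟩ := exists_supQ Q
  have hq : Q x a = f x a μ + γ * ∑ x', p x a μ x' * minRow (Q x') :=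
    (congrFun (congrFun hQ x) a).symm
  have hsum : |∑ x', p x a μ x' * minRow (Q x')| ≤ supQ Q := by
    calc |∑ x', p x a μ x' * minRow (Q x')| ≤ ∑ x', |p x a μ x' * minRow (Q x')| :=
          Finset.abs_sum_le_sum_abs _ _
      _ ≤ ∑ x', p x a μ x' * supQ Q := by
          apply Finset.sum_le_sum
          intro x' _
          rw [abs_mul, abs_of_nonneg (hp0 x a x')]
          exact mul_le_mul_of_nonneg_left (abs_minRow_le_supQ Q x') (hp0 x a x')
      _ = supQ Q := by rw [← Finset.sum_mul, hp1, one_mul]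
  have key : supQ Q ≤ fnorm + γ * supQ Q := by
    calc supQ Q = |Q x a| := hxa
      _ = |f x a μ + γ * ∑ x', p x a μ x' * minRow (Q x')| := by rw [hq]
      _ ≤ |f x a μ| + |γ * ∑ x', p x a μ x' * minRow (Q x')| := abs_add_le _ _
      _ ≤ fnorm + γ * supQ Q := by
          rw [abs_mul, abs_of_pos hγ0]
          exact add_le_add (hf x a) (mul_le_mul_of_nonneg_left hsum hγ0.le)
  rw [le_div_iff₀ (by linarith)]
  linarith

end AuxLemmas

/-- the map μ ↦ Q*_μ is Lipschitz:
‖Q*_μ − Q*_{μ'}‖∞ ≤ ((L_f + (γ/(1−γ))L_p‖f‖∞)/(1−γ))·‖μ − μ'‖₁. -/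
theorem Qstar_lipschitz [Fintype X] [Fintype A] [Nonempty X] [Nonempty A]
    (γ : ℝ) (hγ0 : 0 < γ) (hγ1 : γ < 1)
    (f : X → A → (X → ℝ) → ℝ) (fnorm : ℝ)
    (hf : ∀ x a μ, IsProb μ → |f x a μ| ≤ fnorm)
    (p : X → A → (X → ℝ) → X → ℝ)
    (hp0 : ∀ x a μ x', IsProb μ → 0 ≤ p x a μ x')
    (hp1 : ∀ x a μ, IsProb μ → ∑ x', p x a μ x' = 1)
    (Lf Lp : ℝ) (hLf0 : 0 ≤ Lf) (hLp0 : 0 ≤ Lp)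
    (hLf : ∀ x a μ μ', IsProb μ → IsProb μ' →
      |f x a μ - f x a μ'| ≤ Lf * l1 (fun y => μ y - μ' y))
    (hLp : ∀ x a μ μ', IsProb μ → IsProb μ' →
      ∑ x', |p x a μ x' - p x a μ' x'| ≤ Lp * l1 (fun y => μ y - μ' y))
    (Qstar : (X → ℝ) → X → A → ℝ)
    (hQstar : ∀ μ, IsProb μ → bell f p γ μ (Qstar μ) = Qstar μ) :
    ∀ μ μ' : X → ℝ, IsProb μ → IsProb μ' →
      supQ (fun x a => Qstar μ x a - Qstar μ' x a)
        ≤ ((Lf + (γ / (1 - γ)) * Lp * fnorm) / (1 - γ)) * l1 (fun x => μ x - μ' x) := by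
  intro μ μ' hμ hμ'
  have h1γ : 0 < 1 - γ := by linarith
  set d := l1 (fun x => μ x - μ' x) with hd
  have hd0 : 0 ≤ d := Finset.sum_nonneg fun x _ => abs_nonneg _
  have hfn0 : 0 ≤ fnorm :=
    le_trans (abs_nonneg _) (hf (Classical.arbitrary X) (Classical.arbitrary A) μ hμ)
  set M := supQ (Qstar μ') with hM
  have hM0 : 0 ≤ M := supQ_nonneg _
  have hMb : M ≤ fnorm / (1 - γ) :=
    Qstar_bound γ hγ0 hγ1 f fnorm p μ' (fun x a => hf x a μ' hμ')
      (fun x a x' => hp0 x a μ' x' hμ') (fun x a => hp1 x a μ' hμ')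
      (Qstar μ') (hQstar μ' hμ')
  set S := supQ (fun x a => Qstar μ x a - Qstar μ' x a) with hS
  obtain ⟨x, a, hxa⟩ := exists_supQ (fun x a => Qstar μ x a - Qstar μ' x a)
  have hqμ : Qstar μ x a = f x a μ + γ * ∑ x', p x a μ x' * minRow (Qstar μ x') :=
    (congrFun (congrFun (hQstar μ hμ) x) a).symm
  have hqμ' : Qstar μ' x a = f x a μ' + γ * ∑ x', p x a μ' x' * minRow (Qstar μ' x') :=
    (congrFun (congrFun (hQstar μ' hμ') x) a).symm
  have hsplit : Qstar μ x a - Qstar μ' x a =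
      (f x a μ - f x a μ')
      + γ * (∑ x', p x a μ x' * (minRow (Qstar μ x') - minRow (Qstar μ' x')))
      + γ * (∑ x', (p x a μ x' - p x a μ' x') * minRow (Qstar μ' x')) := by
    have hAB : ∑ x', p x a μ x' * (minRow (Qstar μ x') - minRow (Qstar μ' x'))
         + ∑ x', (p x a μ x' - p x a μ' x') * minRow (Qstar μ' x')
         = ∑ x', p x a μ x' * minRow (Qstar μ x')
           - ∑ x', p x a μ' x' * minRow (Qstar μ' x') := by
      rw [← Finset.sum_add_distrib, ← Finset.sum_sub_distrib]
      apply Finset.sum_congr rfl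
      intro x' _
      ring
    rw [hqμ, hqμ']
    linear_combination (-γ) * hAB
  -- bound the three terms
  have hT1 : |f x a μ - f x a μ'| ≤ Lf * d := hLf x a μ μ' hμ hμ'
  have hT2 : |∑ x', p x a μ x' * (minRow (Qstar μ x') - minRow (Qstar μ' x'))| ≤ S := by
    calc |∑ x', p x a μ x' * (minRow (Qstar μ x') - minRow (Qstar μ' x'))|
        ≤ ∑ x', |p x a μ x' * (minRow (Qstar μ x') - minRow (Qstar μ' x'))| :=
          Finset.abs_sum_le_sum_abs _ _
      _ ≤ ∑ x', p x a μ x' * S := by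
          apply Finset.sum_le_sum
          intro x' _
          rw [abs_mul, abs_of_nonneg (hp0 x a μ x' hμ)]
          refine mul_le_mul_of_nonneg_left ?_ (hp0 x a μ x' hμ)
          exact minRow_lip _ _ _ fun a' =>
            abs_le_supQ (fun x a => Qstar μ x a - Qstar μ' x a) x' a'
      _ = S := by rw [← Finset.sum_mul, hp1 x a μ hμ, one_mul]
  have hT3 : |∑ x', (p x a μ x' - p x a μ' x') * minRow (Qstar μ' x')| ≤ Lp * d * M := by
    calc |∑ x', (p x a μ x' - p x a μ' x') * minRow (Qstar μ' x')|
        ≤ ∑ x', |(p x a μ x' - p x a μ' x') * minRow (Qstar μ' x')| :=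
          Finset.abs_sum_le_sum_abs _ _
      _ ≤ ∑ x', |p x a μ x' - p x a μ' x'| * M := by
          apply Finset.sum_le_sum
          intro x' _
          rw [abs_mul]
          exact mul_le_mul_of_nonneg_left (abs_minRow_le_supQ (Qstar μ') x') (abs_nonneg _)
      _ = (∑ x', |p x a μ x' - p x a μ' x'|) * M := by rw [Finset.sum_mul]
      _ ≤ Lp * d * M := mul_le_mul_of_nonneg_right (hLp x a μ μ' hμ hμ') hM0
  have hkey : S ≤ Lf * d + γ * S + γ * (Lp * d * M) := by
    have habs : |Qstar μ x a - Qstar μ' x a|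
        ≤ |f x a μ - f x a μ'|
          + γ * |∑ x', p x a μ x' * (minRow (Qstar μ x') - minRow (Qstar μ' x'))|
          + γ * |∑ x', (p x a μ x' - p x a μ' x') * minRow (Qstar μ' x')| := by
      rw [hsplit]
      have t1 := abs_add_le
        (f x a μ - f x a μ'
          + γ * ∑ x', p x a μ x' * (minRow (Qstar μ x') - minRow (Qstar μ' x')))
        (γ * ∑ x', (p x a μ x' - p x a μ' x') * minRow (Qstar μ' x'))
      have t2 := abs_add_le (f x a μ - f x a μ')
        (γ * ∑ x', p x a μ x' * (minRow (Qstar μ x') - minRow (Qstar μ' x')))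
      rw [abs_mul, abs_of_pos hγ0] at t1 t2
      linarith
    have := hxa.le.trans habs
    have e2 := mul_le_mul_of_nonneg_left hT2 hγ0.le
    have e3 := mul_le_mul_of_nonneg_left hT3 hγ0.le
    calc S ≤ _ := hxa.le.trans habs
      _ ≤ Lf * d + γ * S + γ * (Lp * d * M) := by linarith
  -- finish
  have hMd : γ * (Lp * d * M) ≤ γ * (Lp * d * (fnorm / (1 - γ))) := by
    apply mul_le_mul_of_nonneg_left _ hγ0.le
    exact mul_le_mul_of_nonneg_left hMb (mul_nonneg hLp0 hd0)
  rw [div_mul_eq_mul_div, le_div_iff₀ h1γ]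
  have hexp : (Lf + γ / (1 - γ) * Lp * fnorm) * d
      = Lf * d + γ * (Lp * d * (fnorm / (1 - γ))) := by
    field_simp
  rw [hexp]
  nlinarith [hkey, hMd]
end
end
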